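/- arXiv:1902.03922 — 2 statements merged into one kernel-verified Lean document; each statement's English description precedes it below -/
import Mathlib

section
/- Let Z : ℝ² → ℂ be a C¹ map with Z(x+1,y) = Z(x,y) + C₁ and Z(x,y+1) = Z(x,y) + C₂, and let R = [0,1] × [0,1]. Then ∫_R dZ ∧ dconj(Z) = C₁·conj(C₂) − C₂·conj(C₁). -/
/-!
For `W` of class `C²` the `1`-form `Z dW` has exterior derivative `dZ ∧ dW`, so by the divergence
theorem `∫_R dZ ∧ dW` is an integral over `∂R`. Quasi-periodicity makes the contributions of
opposite sides of `R` differ by `C₁ dW` and `C₂ dW` integrated along a single side, which gives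
`C₁ D₂ - C₂ D₁` when `W` has periods `D₁, D₂`. A `C¹` map `W` is the limit of its mollifications,
which are smooth with the same periods and whose derivatives converge pointwise and stay bounded
(a continuous doubly periodic function is bounded), so dominated convergence extends the identity
to `C¹` maps. The theorem is the case `W = conj Z`.
-/

open Complex

open MeasureTheory Set Filter Function Topology
open scoped Convolution

theorem isCompact_range_of_periodic_prod {X : Type*} [TopologicalSpace X] {F : ℝ × ℝ → X}
    (hF : Continuous F) (h₁ : Periodic F (1, 0)) (h₂ : Periodic F (0, 1)) :
    IsCompact (range F) := by
  suffices range F = F '' Icc (0, 0) (1, 1) from this ▸ isCompact_Icc.image hF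
  refine (image_subset_range _ _).antisymm' ?_
  rintro _ ⟨p, rfl⟩
  refine ⟨(Int.fract p.1, Int.fract p.2), ⟨⟨Int.fract_nonneg _, Int.fract_nonneg _⟩,
    ⟨(Int.fract_lt_one _).le, (Int.fract_lt_one _).le⟩⟩, ?_⟩
  have hp : (Int.fract p.1, Int.fract p.2) =
      p - ⌊p.1⌋ • ((1 : ℝ), (0 : ℝ)) - ⌊p.2⌋ • ((0 : ℝ), (1 : ℝ)) := by
    ext <;> simp
  rw [hp, h₂.sub_zsmul_eq, h₁.sub_zsmul_eq]

section Calculus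

variable {E F : Type*} [NormedAddCommGroup E] [NormedSpace ℝ E]
  [NormedAddCommGroup F] [NormedSpace ℝ F]

theorem fderiv_fderiv_apply {W : E → F} {p : E} (hW : DifferentiableAt ℝ (fderiv ℝ W) p)
    (v u : E) : fderiv ℝ (fun q => fderiv ℝ W q v) p u = fderiv ℝ (fderiv ℝ W) p u v := by
  simp [fderiv_clm_apply hW (differentiableAt_const v)]

theorem integral_fderiv_apply_add_smul [CompleteSpace F] {W : E → F} (hW : ContDiff ℝ 1 W)
    (a v : E) : ∫ t in (0 : ℝ)..1, fderiv ℝ W (a + t • v) v = W (a + v) - W a := by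
  have hderiv (t : ℝ) :
      HasDerivAt (fun t : ℝ => W (a + t • v)) (fderiv ℝ W (a + t • v) v) t := by
    simpa [Function.comp_def] using ((hW.differentiable one_ne_zero) _).hasFDerivAt.comp_hasDerivAt
      t (((hasDerivAt_id t).smul_const v).const_add a)
  have hcont : Continuous fun t : ℝ => fderiv ℝ W (a + t • v) v := by fun_prop
  simpa using intervalIntegral.integral_eq_sub_of_hasDerivAt (fun t _ => hderiv t)
    (hcont.intervalIntegrable 0 1)

end Calculus

namespace ContDiffBump

variable {G F : Type*} [NormedAddCommGroup G] [NormedSpace ℝ G] [FiniteDimensional ℝ G]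
  [MeasurableSpace G] [BorelSpace G] {μ : Measure G} [μ.IsAddHaarMeasure]
  [NormedAddCommGroup F] [NormedSpace ℝ F] (φ : ContDiffBump (0 : G))

theorem integrable_normed_smul_comp_sub {g : G → F} (hg : Continuous g) (p : G) :
    Integrable (fun t => φ.normed μ t • g (p - t)) μ :=
  (φ.continuous_normed.smul (hg.comp (continuous_sub_left p))).integrable_of_hasCompactSupport
    φ.hasCompactSupport_normed.smul_right

theorem norm_normed_convolution_le {g : G → F} {M : ℝ} (hM : ∀ x, ‖g x‖ ≤ M) (p : G) :
    ‖(φ.normed μ ⋆[ContinuousLinearMap.lsmul ℝ ℝ, μ] g) p‖ ≤ M := by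
  rw [convolution_def]
  calc ‖∫ t, φ.normed μ t • g (p - t) ∂μ‖ ≤ ∫ t, φ.normed μ t * M ∂μ := by
        refine norm_integral_le_of_norm_le (φ.integrable_normed.mul_const M)
          (ae_of_all _ fun t => ?_)
        rw [norm_smul, Real.norm_of_nonneg (φ.nonneg_normed t)]
        exact mul_le_mul_of_nonneg_left (hM _) (φ.nonneg_normed t)
    _ = M := by rw [integral_mul_const, φ.integral_normed, one_mul]

theorem hasFDerivAt_normed_convolution {g : G → F} (hg : ContDiff ℝ 1 g) {M : ℝ}
    (hM : ∀ x, ‖fderiv ℝ g x‖ ≤ M) (p : G) :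
    HasFDerivAt (φ.normed μ ⋆[ContinuousLinearMap.lsmul ℝ ℝ, μ] g)
      ((φ.normed μ ⋆[ContinuousLinearMap.lsmul ℝ ℝ, μ] fderiv ℝ g) p) p := by
  have hg' : Continuous (fderiv ℝ g) := hg.continuous_fderiv one_ne_zero
  simp only [convolution_def, ContinuousLinearMap.lsmul_apply]
  refine hasFDerivAt_integral_of_dominated_of_fderiv_le (bound := fun t => φ.normed μ t * M)
    (F' := fun x t => φ.normed μ t • fderiv ℝ g (x - t)) univ_mem
    (Eventually.of_forall fun x => (φ.integrable_normed_smul_comp_sub hg.continuous x).1)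
    (φ.integrable_normed_smul_comp_sub hg.continuous p)
    (φ.integrable_normed_smul_comp_sub hg' p).1 (ae_of_all _ fun t x _ => ?_)
    (φ.integrable_normed.mul_const M) (ae_of_all _ fun t x _ => ?_)
  · rw [norm_smul, Real.norm_of_nonneg (φ.nonneg_normed t)]
    exact mul_le_mul_of_nonneg_left (hM _) (φ.nonneg_normed t)
  · exact (((hg.differentiable one_ne_zero) _).hasFDerivAt.comp x
      ((hasFDerivAt_id x).sub_const t)).const_smul _

theorem normed_convolution_add_of_map_add [CompleteSpace F] {g : G → F} (hg : Continuous g)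
    {v : G} {C : F} (hv : ∀ q, g (q + v) = g q + C) (p : G) :
    (φ.normed μ ⋆[ContinuousLinearMap.lsmul ℝ ℝ, μ] g) (p + v) =
      (φ.normed μ ⋆[ContinuousLinearMap.lsmul ℝ ℝ, μ] g) p + C := by
  simp only [convolution_def, ContinuousLinearMap.lsmul_apply]
  calc ∫ t, φ.normed μ t • g (p + v - t) ∂μ
      = ∫ t, (φ.normed μ t • g (p - t) + φ.normed μ t • C) ∂μ := by
        simp_rw [add_sub_right_comm p v, hv, smul_add]
    _ = (∫ t, φ.normed μ t • g (p - t) ∂μ) + C := by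
        rw [integral_add (φ.integrable_normed_smul_comp_sub hg p)
          (φ.integrable_normed.smul_const C), integral_smul_const, φ.integral_normed, one_smul]

end ContDiffBump

structure IsQuasiPeriodic {E : Type*} [Add E] (Z : ℝ × ℝ → E) (C₁ C₂ : E) : Prop where
  add_fst : ∀ q, Z (q + (1, 0)) = Z q + C₁
  add_snd : ∀ q, Z (q + (0, 1)) = Z q + C₂

namespace IsQuasiPeriodic

section Add

variable {E : Type*} [Add E] {Z : ℝ × ℝ → E} {C₁ C₂ : E}

theorem of_add_one (h₁ : ∀ x y : ℝ, Z (x + 1, y) = Z (x, y) + C₁)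
    (h₂ : ∀ x y : ℝ, Z (x, y + 1) = Z (x, y) + C₂) : IsQuasiPeriodic Z C₁ C₂ where
  add_fst := fun (x, y) => by simpa using h₁ x y
  add_snd := fun (x, y) => by simpa using h₂ x y

theorem map {E' F : Type*} [Add E'] [FunLike F E E'] [AddHomClass F E E']
    (h : IsQuasiPeriodic Z C₁ C₂) (L : F) :
    IsQuasiPeriodic (fun q => L (Z q)) (L C₁) (L C₂) where
  add_fst q := by rw [h.add_fst, map_add]
  add_snd q := by rw [h.add_snd, map_add]

end Add

variable {E : Type*} [NormedAddCommGroup E] [NormedSpace ℝ E] {Z : ℝ × ℝ → E} {C₁ C₂ : E}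

theorem fderiv_periodic_fst (h : IsQuasiPeriodic Z C₁ C₂) : Periodic (fderiv ℝ Z) (1, 0) :=
  fun p => by rw [← fderiv_comp_add_right, funext h.add_fst, fderiv_add_const]

theorem fderiv_periodic_snd (h : IsQuasiPeriodic Z C₁ C₂) : Periodic (fderiv ℝ Z) (0, 1) :=
  fun p => by rw [← fderiv_comp_add_right, funext h.add_snd, fderiv_add_const]

theorem exists_norm_fderiv_le (h : IsQuasiPeriodic Z C₁ C₂) (hZ : ContDiff ℝ 1 Z) :
    ∃ M, ∀ p, ‖fderiv ℝ Z p‖ ≤ M := by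
  obtain ⟨M, hM⟩ := (isCompact_range_of_periodic_prod (hZ.continuous_fderiv one_ne_zero)
    h.fderiv_periodic_fst h.fderiv_periodic_snd).isBounded.exists_norm_le
  exact ⟨M, fun p => hM _ (mem_range_self p)⟩

theorem normed_convolution [CompleteSpace E] (h : IsQuasiPeriodic Z C₁ C₂) (hZ : Continuous Z)
    (φ : ContDiffBump (0 : ℝ × ℝ)) :
    IsQuasiPeriodic (φ.normed volume ⋆[ContinuousLinearMap.lsmul ℝ ℝ, volume] Z) C₁ C₂ where
  add_fst := φ.normed_convolution_add_of_map_add hZ h.add_fst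
  add_snd := φ.normed_convolution_add_of_map_add hZ h.add_snd

end IsQuasiPeriodic

section Wedge

variable {A : Type*} [NormedRing A] [NormedAlgebra ℝ A]

/-- `dZ ∧ dW = wedgeDeriv Z W • dx ∧ dy`. -/
noncomputable def wedgeDeriv (Z W : ℝ × ℝ → A) (p : ℝ × ℝ) : A :=
  fderiv ℝ Z p (1, 0) * fderiv ℝ W p (0, 1) - fderiv ℝ Z p (0, 1) * fderiv ℝ W p (1, 0)

theorem wedgeDeriv_eq_fderiv_sub_fderiv {Z W : ℝ × ℝ → A} {p : ℝ × ℝ}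
    (hZ : DifferentiableAt ℝ Z p) (hW : ContDiffAt ℝ 2 W p) :
    wedgeDeriv Z W p = fderiv ℝ (fun q => Z q * fderiv ℝ W q (0, 1)) p (1, 0)
      - fderiv ℝ (fun q => Z q * fderiv ℝ W q (1, 0)) p (0, 1) := by
  have hW' : DifferentiableAt ℝ (fderiv ℝ W) p :=
    (hW.fderiv_right (m := 1) le_rfl).differentiableAt one_ne_zero
  have hsymm := (hW.isSymmSndFDerivAt (by simp)) (1, 0) (0, 1)
  rw [fderiv_fun_mul' hZ (hW'.clm_apply (differentiableAt_const _)),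
    fderiv_fun_mul' hZ (hW'.clm_apply (differentiableAt_const _))]
  simp only [add_apply, smul_apply, fderiv_fderiv_apply hW', hsymm, wedgeDeriv, smul_eq_mul,
    op_smul_eq_mul]
  abel

theorem norm_wedgeDeriv_le (Z W : ℝ × ℝ → A) (p : ℝ × ℝ) :
    ‖wedgeDeriv Z W p‖ ≤ 2 * (‖fderiv ℝ Z p‖ * ‖fderiv ℝ W p‖) := by
  have hunit (L : ℝ × ℝ →L[ℝ] A) (v : ℝ × ℝ) (hv : ‖v‖ = 1) : ‖L v‖ ≤ ‖L‖ := by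
    simpa [hv] using L.le_opNorm v
  calc ‖wedgeDeriv Z W p‖
      ≤ ‖fderiv ℝ Z p (1, 0)‖ * ‖fderiv ℝ W p (0, 1)‖
        + ‖fderiv ℝ Z p (0, 1)‖ * ‖fderiv ℝ W p (1, 0)‖ :=
        (norm_sub_le _ _).trans (add_le_add (norm_mul_le _ _) (norm_mul_le _ _))
    _ ≤ ‖fderiv ℝ Z p‖ * ‖fderiv ℝ W p‖ + ‖fderiv ℝ Z p‖ * ‖fderiv ℝ W p‖ := by
        gcongr <;> apply hunit <;> simp
    _ = 2 * (‖fderiv ℝ Z p‖ * ‖fderiv ℝ W p‖) := by ring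

theorem tendsto_integral_wedgeDeriv {Z W : ℝ × ℝ → A} {Wₙ : ℕ → ℝ × ℝ → A} {M N : ℝ}
    (μ : Measure (ℝ × ℝ)) [IsFiniteMeasure μ] (hZ : ContDiff ℝ 1 Z)
    (hWₙ : ∀ n, ContDiff ℝ 1 (Wₙ n)) (hM : ∀ p, ‖fderiv ℝ Z p‖ ≤ M)
    (hN : ∀ n p, ‖fderiv ℝ (Wₙ n) p‖ ≤ N)
    (hlim : ∀ p, Tendsto (fun n => fderiv ℝ (Wₙ n) p) atTop (𝓝 (fderiv ℝ W p))) :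
    Tendsto (fun n => ∫ p, wedgeDeriv Z (Wₙ n) p ∂μ) atTop (𝓝 (∫ p, wedgeDeriv Z W p ∂μ)) := by
  refine tendsto_integral_of_dominated_convergence (fun _ => 2 * (M * N)) (fun n => ?_)
    (integrable_const _) (fun n => ae_of_all _ fun p => ?_) (ae_of_all _ fun p => ?_)
  · have := hZ.continuous_fderiv one_ne_zero
    have := (hWₙ n).continuous_fderiv one_ne_zero
    exact (by unfold wedgeDeriv; fun_prop : Continuous _).aestronglyMeasurable
  · refine (norm_wedgeDeriv_le _ _ p).trans ?_
    gcongr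
    exacts [(norm_nonneg _).trans (hM p), hM p, hN n p]
  · have hlim' (v : ℝ × ℝ) :
        Tendsto (fun n => fderiv ℝ (Wₙ n) p v) atTop (𝓝 (fderiv ℝ W p v)) :=
      ((ContinuousLinearMap.apply ℝ A v).continuous.tendsto _).comp (hlim p)
    exact (tendsto_const_nhds.mul (hlim' _)).sub (tendsto_const_nhds.mul (hlim' _))

variable [CompleteSpace A]

theorem intervalIntegral.integral_const_mul_of_intervalIntegrable {f : ℝ → A} {a b : ℝ}
    (hf : IntervalIntegrable f volume a b) (c : A) :
    ∫ t in a..b, c * f t = c * ∫ t in a..b, f t :=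
  (ContinuousLinearMap.mul ℝ A c).intervalIntegral_comp_comm hf

theorem integral_mul_fderiv_add_sub {E : Type*} [NormedAddCommGroup E] [NormedSpace ℝ E]
    {Z W : E → A} (hW : ContDiff ℝ 1 W) {e : E} {C : A} (hZ : ∀ q, Z (q + e) = Z q + C)
    (hW' : Periodic (fderiv ℝ W) e) (a v : E) :
    ∫ t in (0 : ℝ)..1, (Z (a + t • v + e) * fderiv ℝ W (a + t • v + e) v
      - Z (a + t • v) * fderiv ℝ W (a + t • v) v) = C * (W (a + v) - W a) := by
  simp only [hZ, hW' _, add_mul, add_sub_cancel_left]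
  have hcont : Continuous fun t : ℝ => fderiv ℝ W (a + t • v) v := by fun_prop
  rw [intervalIntegral.integral_const_mul_of_intervalIntegrable (hcont.intervalIntegrable 0 1),
    integral_fderiv_apply_add_smul hW]

theorem integral_wedgeDeriv_of_contDiff_two {Z W : ℝ × ℝ → A} {C₁ C₂ D₁ D₂ : A}
    (hZ : ContDiff ℝ 1 Z) (hW : ContDiff ℝ 2 W)
    (hZq : IsQuasiPeriodic Z C₁ C₂) (hWq : IsQuasiPeriodic W D₁ D₂) :
    ∫ p in Icc (0, 0) (1, 1), wedgeDeriv Z W p = C₁ * D₂ - C₂ * D₁ := by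
  set f : ℝ × ℝ → A := fun q => Z q * fderiv ℝ W q (0, 1)
  set g : ℝ × ℝ → A := fun q => -(Z q * fderiv ℝ W q (1, 0))
  have hW' : ContDiff ℝ 1 (fderiv ℝ W) := hW.fderiv_right le_rfl
  have hf : ContDiff ℝ 1 f := hZ.mul (hW'.clm_apply contDiff_const)
  have hg : ContDiff ℝ 1 g := (hZ.mul (hW'.clm_apply contDiff_const)).neg
  have hdiv (p : ℝ × ℝ) : wedgeDeriv Z W p = fderiv ℝ f p (1, 0) + fderiv ℝ g p (0, 1) := by
    rw [wedgeDeriv_eq_fderiv_sub_fderiv (hZ.differentiable one_ne_zero p) hW.contDiffAt,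
      sub_eq_add_neg]
    simp only [f, g, fderiv_fun_neg, neg_apply]
  have hf_edge := integral_mul_fderiv_add_sub (hW.of_le one_le_two) hZq.add_fst
    hWq.fderiv_periodic_fst (0, 0) (0, 1)
  have hg_edge := integral_mul_fderiv_add_sub (hW.of_le one_le_two) hZq.add_snd
    hWq.fderiv_periodic_snd (0, 0) (1, 0)
  rw [hWq.add_snd, add_sub_cancel_left] at hf_edge
  rw [hWq.add_fst, add_sub_cancel_left] at hg_edge
  simp only [Prod.smul_mk, smul_eq_mul, mul_zero, mul_one, Prod.mk_add_mk, zero_add,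
    add_zero] at hf_edge hg_edge
  have hf_int (x : ℝ) : IntervalIntegrable (fun y => f (x, y)) volume 0 1 :=
    (hf.continuous.comp (by fun_prop)).intervalIntegrable 0 1
  have hg_int (y : ℝ) : IntervalIntegrable (fun x => g (x, y)) volume 0 1 :=
    (hg.continuous.comp (by fun_prop)).intervalIntegrable 0 1
  calc ∫ p in Icc (0, 0) (1, 1), wedgeDeriv Z W p
      = ∫ p in Icc (0, 0) (1, 1), fderiv ℝ f p (1, 0) + fderiv ℝ g p (0, 1) := by
        simp_rw [hdiv]
    _ = (∫ x in (0 : ℝ)..1, g (x, 1) - g (x, 0)) + ∫ y in (0 : ℝ)..1, f (1, y) - f (0, y) := by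
        rw [integral_divergence_prod_Icc_of_hasFDerivAt_of_le f g (fderiv ℝ f) (fderiv ℝ g)
          (0, 0) (1, 1) (by simp [Prod.le_def]) hf.continuous.continuousOn
          hg.continuous.continuousOn (fun p _ => (hf.differentiable one_ne_zero p).hasFDerivAt)
          (fun p _ => (hg.differentiable one_ne_zero p).hasFDerivAt)
          (by fun_prop : Continuous _).integrableOn_Icc,
          intervalIntegral.integral_sub (hg_int 1) (hg_int 0),
          intervalIntegral.integral_sub (hf_int 1) (hf_int 0)]
        abel
    _ = -(C₂ * D₁) + C₁ * D₂ := by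
        rw [← hf_edge, ← hg_edge, ← intervalIntegral.integral_neg]
        simp only [f, g, neg_sub_neg, neg_sub]
    _ = C₁ * D₂ - C₂ * D₁ := by abel

theorem integral_wedgeDeriv_of_isQuasiPeriodic {Z W : ℝ × ℝ → A} {C₁ C₂ D₁ D₂ : A}
    (hZ : ContDiff ℝ 1 Z) (hW : ContDiff ℝ 1 W)
    (hZq : IsQuasiPeriodic Z C₁ C₂) (hWq : IsQuasiPeriodic W D₁ D₂) :
    ∫ p in Icc (0, 0) (1, 1), wedgeDeriv Z W p = C₁ * D₂ - C₂ * D₁ := by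
  obtain ⟨M, hM⟩ := hZq.exists_norm_fderiv_le hZ
  obtain ⟨N, hN⟩ := hWq.exists_norm_fderiv_le hW
  let φ (n : ℕ) : ContDiffBump (0 : ℝ × ℝ) :=
    ⟨1 / (n + 1), 2 / (n + 1), by positivity, by gcongr; norm_num⟩
  have hφ : Tendsto (fun n => (φ n).rOut) atTop (𝓝 0) := by
    simpa [φ, div_eq_mul_inv] using
      (tendsto_one_div_add_atTop_nhds_zero_nat (𝕜 := ℝ)).const_mul 2
  let Wₙ (n : ℕ) := (φ n).normed volume ⋆[ContinuousLinearMap.lsmul ℝ ℝ, volume] W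
  have hWₙ (n : ℕ) : ContDiff ℝ 2 (Wₙ n) :=
    (φ n).hasCompactSupport_normed.contDiff_convolution_left _ (φ n).contDiff_normed
      hW.continuous.locallyIntegrable
  have hderiv (n : ℕ) (p : ℝ × ℝ) : fderiv ℝ (Wₙ n) p =
      ((φ n).normed volume ⋆[ContinuousLinearMap.lsmul ℝ ℝ, volume] fderiv ℝ W) p :=
    ((φ n).hasFDerivAt_normed_convolution hW hN p).fderiv
  have : IsFiniteMeasure (volume.restrict (Icc ((0 : ℝ), (0 : ℝ)) (1, 1))) :=
    isFiniteMeasure_restrict.2 isCompact_Icc.measure_ne_top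
  refine tendsto_nhds_unique (tendsto_integral_wedgeDeriv _ hZ
    (fun n => (hWₙ n).of_le one_le_two) hM
    (fun n p => hderiv n p ▸ (φ n).norm_normed_convolution_le hN p)
    (fun p => by simpa only [hderiv] using
      (ContDiffBump.convolution_tendsto_right_of_continuous hφ
        (hW.continuous_fderiv one_ne_zero) p)))
    (tendsto_const_nhds.congr fun n => (integral_wedgeDeriv_of_contDiff_two hZ (hWₙ n) hZq
      (hWq.normed_convolution hW.continuous (φ n))).symm)

end Wedge

theorem stmt_14 (Z : ℝ × ℝ → ℂ) (hZ : ContDiff ℝ 1 Z) (C₁ C₂ : ℂ)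
    (h1 : ∀ x y : ℝ, Z (x + 1, y) = Z (x, y) + C₁)
    (h2 : ∀ x y : ℝ, Z (x, y + 1) = Z (x, y) + C₂) :
    ∫ p in Set.Icc ((0 : ℝ), (0 : ℝ)) ((1 : ℝ), (1 : ℝ)),
        (fderiv ℝ Z p (1, 0) * fderiv ℝ (fun q => (starRingEnd ℂ) (Z q)) p (0, 1) -
          fderiv ℝ Z p (0, 1) * fderiv ℝ (fun q => (starRingEnd ℂ) (Z q)) p (1, 0)) =
      C₁ * (starRingEnd ℂ) C₂ - C₂ * (starRingEnd ℂ) C₁ := by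
  have hZq := IsQuasiPeriodic.of_add_one h1 h2
  exact integral_wedgeDeriv_of_isQuasiPeriodic hZ (conjCLE.contDiff.comp hZ) hZq
    (hZq.map (starRingEnd ℂ))
end

section
/- Let f : [0,1]² → ℂ and suppose u : ℝ² → ℂ is a C¹ doubly periodic function (period 1 in both variables) and Z : ℝ² → ℂ is a C¹ map with dZ = a dx + b dy where a, b are doubly periodic C¹ functions with a_y = b_x (i.e., dZ is closed). If L u := b u_x − a u_y = f on ℝ² with f doubly periodic, then ∫_{[0,1]²} f(x,y) dx dy = 0. -/
/-!
Since `dZ = a dx + b dy` is closed, `L u = b u_x - a u_y` is the divergence of the field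
`(b u, -a u)`, i.e. `L u dx ∧ dy = d(u dZ)`. By the divergence theorem its integral over the unit
square is the flux through the boundary, and double periodicity makes the contributions of
opposite sides cancel.
-/

open MeasureTheory Set

theorem integral_Icc_divergence_eq_zero_of_faces_eq {E : Type*} [NormedAddCommGroup E]
    [NormedSpace ℝ E] {F G : ℝ × ℝ → E} (hF : ContDiff ℝ 1 F) (hG : ContDiff ℝ 1 G)
    {a b : ℝ × ℝ} (hab : a ≤ b) (hFx : ∀ y, F (b.1, y) = F (a.1, y))
    (hGy : ∀ x, G (x, b.2) = G (x, a.2)) :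
    ∫ p in Icc a b, fderiv ℝ F p (1, 0) + fderiv ℝ G p (0, 1) = 0 := by
  have hFd := hF.differentiable one_ne_zero
  have hGd := hG.differentiable one_ne_zero
  have hcont : Continuous fun p => fderiv ℝ F p (1, 0) + fderiv ℝ G p (0, 1) :=
    ((hF.continuous_fderiv one_ne_zero).clm_apply continuous_const).add
      ((hG.continuous_fderiv one_ne_zero).clm_apply continuous_const)
  rw [integral_divergence_prod_Icc_of_hasFDerivAt_of_le F G (fderiv ℝ F) (fderiv ℝ G) a b hab
    hF.continuous.continuousOn hG.continuous.continuousOn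
    (fun p _ => (hFd p).hasFDerivAt) (fun p _ => (hGd p).hasFDerivAt)
    hcont.integrableOn_Icc]
  simp only [hFx, hGy, sub_self, zero_add]

theorem mul_fderiv_sub_mul_fderiv_eq_of_fderiv_eq {E 𝔸 : Type*} [NormedAddCommGroup E]
    [NormedSpace ℝ E] [NormedCommRing 𝔸] [NormedAlgebra ℝ 𝔸] {a b u : E → 𝔸} {p v w : E}
    (ha : DifferentiableAt ℝ a p) (hb : DifferentiableAt ℝ b p) (hu : DifferentiableAt ℝ u p)
    (hclosed : fderiv ℝ a p w = fderiv ℝ b p v) :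
    b p * fderiv ℝ u p v - a p * fderiv ℝ u p w =
      fderiv ℝ (fun q => b q * u q) p v + fderiv ℝ (fun q => -(a q * u q)) p w := by
  rw [fderiv_fun_neg, fderiv_fun_mul hb hu, fderiv_fun_mul ha hu]
  simp only [neg_apply, add_apply, smul_apply, smul_eq_mul, hclosed]
  ring

theorem stmt_17_general (a b u f : ℝ × ℝ → ℂ)
    (ha : ContDiff ℝ 1 a) (hb : ContDiff ℝ 1 b) (hu : ContDiff ℝ 1 u)
    (hap : ∀ x y : ℝ, a (x + 1, y) = a (x, y) ∧ a (x, y + 1) = a (x, y))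
    (hbp : ∀ x y : ℝ, b (x + 1, y) = b (x, y) ∧ b (x, y + 1) = b (x, y))
    (hup : ∀ x y : ℝ, u (x + 1, y) = u (x, y) ∧ u (x, y + 1) = u (x, y))
    (hclosed : ∀ p : ℝ × ℝ, fderiv ℝ a p (0, 1) = fderiv ℝ b p (1, 0))
    (hL : ∀ p : ℝ × ℝ, b p * fderiv ℝ u p (1, 0) - a p * fderiv ℝ u p (0, 1) = f p) :
    ∫ p in Set.Icc ((0 : ℝ), (0 : ℝ)) ((1 : ℝ), (1 : ℝ)), f p = 0 := by
  have hf : f = fun p => fderiv ℝ (fun q => b q * u q) p (1, 0) +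
      fderiv ℝ (fun q => -(a q * u q)) p (0, 1) := by
    ext p
    rw [← hL p]
    exact mul_fderiv_sub_mul_fderiv_eq_of_fderiv_eq (ha.differentiable one_ne_zero p)
      (hb.differentiable one_ne_zero p) (hu.differentiable one_ne_zero p) (hclosed p)
  rw [hf]
  refine integral_Icc_divergence_eq_zero_of_faces_eq (hb.mul hu) (ha.mul hu).neg
    (by norm_num) (fun y => ?_) (fun x => ?_)
  · simpa using congr_arg₂ (· * ·) (hbp 0 y).1 (hup 0 y).1
  · simpa using congr_arg₂ (· * ·) (hap x 0).2 (hup x 0).2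

theorem stmt_17 (a b u f : ℝ × ℝ → ℂ)
    (ha : ContDiff ℝ 1 a) (hb : ContDiff ℝ 1 b) (hu : ContDiff ℝ 1 u)
    (hap : ∀ x y : ℝ, a (x + 1, y) = a (x, y) ∧ a (x, y + 1) = a (x, y))
    (hbp : ∀ x y : ℝ, b (x + 1, y) = b (x, y) ∧ b (x, y + 1) = b (x, y))
    (hup : ∀ x y : ℝ, u (x + 1, y) = u (x, y) ∧ u (x, y + 1) = u (x, y))
    (hfp : ∀ x y : ℝ, f (x + 1, y) = f (x, y) ∧ f (x, y + 1) = f (x, y))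
    (hclosed : ∀ p : ℝ × ℝ, fderiv ℝ a p (0, 1) = fderiv ℝ b p (1, 0))
    (hL : ∀ p : ℝ × ℝ, b p * fderiv ℝ u p (1, 0) - a p * fderiv ℝ u p (0, 1) = f p) :
    ∫ p in Set.Icc ((0 : ℝ), (0 : ℝ)) ((1 : ℝ), (1 : ℝ)), f p = 0 :=
  stmt_17_general a b u f ha hb hu hap hbp hup hclosed hL
end
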